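/- arXiv:1902.04055 — 4 statements merged into one kernel-verified Lean document; each statement's English description precedes it below -/
import Mathlib

section
/- The set of signed prefix reversals {r_1^B, ..., r_n^B} generates the hyperoctahedral group B_n of signed permutations. -/
/-- The signed prefix reversal `r_i^B` as a function on `ℤ`: it sends `j` to `-(i+1-j)`
for `1 ≤ j ≤ i`, respects `f (-j) = - f j`, and fixes everything with `|j| > i`. -/
def burntFun (i : ℤ) : ℤ → ℤ := fun j =>
  if 1 ≤ j ∧ j ≤ i then j - (i + 1) else if -i ≤ j ∧ j ≤ -1 then j + (i + 1) else j

lemma burntFun_invol (i : ℤ) : Function.Involutive (burntFun i) := by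
  intro j; unfold burntFun; split_ifs <;> omega

/-- The burnt pancake flip (signed prefix reversal) `r_i^B`, as a permutation of `ℤ`. -/
def burntFlip (i : ℕ) : Equiv.Perm ℤ := Function.Involutive.toPerm _ (burntFun_invol i)


/-- The hyperoctahedral group `B_n`, realized as the subgroup of `Equiv.Perm ℤ` of
permutations `π` of `{-n,...,-1,1,...,n}` (fixing everything with `|x| > n`) satisfying
`π (-x) = - π x` for all `x`. -/
def signedPermsOn (n : ℕ) : Subgroup (Equiv.Perm ℤ) where
  carrier := {π | (∀ x, π (-x) = - π x) ∧ ∀ x, (n : ℤ) < |x| → π x = x}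
  one_mem' := ⟨fun _ => rfl, fun _ _ => rfl⟩
  mul_mem' := by
    rintro a b ⟨ha1, ha2⟩ ⟨hb1, hb2⟩
    refine ⟨fun x => ?_, fun x hx => ?_⟩
    · rw [Equiv.Perm.mul_apply, Equiv.Perm.mul_apply, hb1, ha1]
    · rw [Equiv.Perm.mul_apply, hb2 x hx, ha2 x hx]
  inv_mem' := by
    rintro a ⟨ha1, ha2⟩
    refine ⟨fun x => ?_, fun x hx => ?_⟩
    · have h : a (-(a⁻¹ x)) = -x := by rw [ha1, Equiv.Perm.coe_inv, Equiv.apply_symm_apply]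
      calc a⁻¹ (-x) = a⁻¹ (a (-(a⁻¹ x))) := by rw [h]
      _ = -(a⁻¹ x) := by simp
    · have h := ha2 x hx
      calc a⁻¹ x = a⁻¹ (a x) := by rw [h]
      _ = x := by simp

/-!
Burnt pancake sorting, by induction on `n`. Given `π ∈ B_{n+1}`, let `a = π⁻¹ (n+1)`. If `a > 0`,
the flip `r_a` brings `a` to `-1` and `r_{n+1}` then brings `-1` to `n+1`; if `a < 0`, a preliminary
`r_{n+1}` first makes it positive. So some word `σ` in the flips has `σ a = n+1`, and `π σ⁻¹` fixes
`n+1`, hence (being odd) also `-(n+1)`, i.e. it lies in `B_n`.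
-/

open Subgroup

def burntFlipSet (n : ℕ) : Set (Equiv.Perm ℤ) := {σ | ∃ i, 1 ≤ i ∧ i ≤ n ∧ σ = burntFlip i}

lemma burntFlip_apply (i : ℕ) (j : ℤ) :
    burntFlip i j = if 1 ≤ j ∧ j ≤ (i : ℤ) then j - (i + 1)
      else if -(i : ℤ) ≤ j ∧ j ≤ -1 then j + (i + 1) else j := rfl

lemma burntFlip_apply_self {k : ℕ} (hk : 1 ≤ k) : burntFlip k k = -1 := by
  rw [burntFlip_apply]; split_ifs <;> omega

lemma burntFlip_apply_neg_one {m : ℕ} (hm : 1 ≤ m) : burntFlip m (-1) = m := by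
  rw [burntFlip_apply]; split_ifs <;> omega

lemma burntFlip_apply_of_neg {m : ℕ} {a : ℤ} (h₁ : -(m : ℤ) ≤ a) (h₂ : a ≤ -1) :
    burntFlip m a = a + m + 1 := by
  rw [burntFlip_apply]; split_ifs <;> omega

lemma burntFlip_mem_signedPermsOn {i n : ℕ} (h : i ≤ n) : burntFlip i ∈ signedPermsOn n := by
  refine ⟨fun x => ?_, fun x hx => ?_⟩
  · rw [burntFlip_apply, burntFlip_apply]
    split_ifs <;> omega
  · rw [lt_abs] at hx
    rw [burntFlip_apply]
    split_ifs <;> omega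

lemma burntFlip_mem_closure {i n : ℕ} (h₁ : 1 ≤ i) (h₂ : i ≤ n) :
    burntFlip i ∈ closure (burntFlipSet n) :=
  subset_closure ⟨i, h₁, h₂, rfl⟩

lemma closure_burntFlipSet_mono {m n : ℕ} (h : m ≤ n) :
    closure (burntFlipSet m) ≤ closure (burntFlipSet n) :=
  closure_mono fun _ ⟨i, h₁, h₂, hσ⟩ => ⟨i, h₁, h₂.trans h, hσ⟩

lemma closure_burntFlipSet_le (n : ℕ) : closure (burntFlipSet n) ≤ signedPermsOn n :=
  (closure_le _).2 fun _ ⟨_, _, h, hσ⟩ => hσ ▸ burntFlip_mem_signedPermsOn h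

section signedPermsOn

variable {n : ℕ} {π : Equiv.Perm ℤ}

lemma apply_zero_of_mem_signedPermsOn (hπ : π ∈ signedPermsOn n) : π 0 = 0 := by
  have := hπ.1 0
  rw [neg_zero] at this
  omega

lemma abs_apply_le_of_mem_signedPermsOn (hπ : π ∈ signedPermsOn n) {x : ℤ}
    (hx : |x| ≤ n) : |π x| ≤ n := by
  by_contra! h
  have hfix : π (π x) = π x := hπ.2 _ h
  rw [π.injective hfix] at h
  omega

lemma mem_signedPermsOn_of_apply_eq (hπ : π ∈ signedPermsOn (n + 1))
    (hfix : π ((n : ℤ) + 1) = (n : ℤ) + 1) : π ∈ signedPermsOn n := by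
  refine ⟨hπ.1, fun x hx => ?_⟩
  rcases lt_or_eq_of_le (Int.add_one_le_of_lt hx) with hlt | heq
  · exact hπ.2 x (by push_cast; exact hlt)
  · rcases abs_eq (by omega) |>.1 heq.symm with rfl | rfl
    · exact hfix
    · rw [hπ.1, hfix]

lemma eq_one_of_mem_signedPermsOn_zero (hπ : π ∈ signedPermsOn 0) : π = 1 := by
  ext x
  rcases eq_or_ne x 0 with rfl | hx
  · simp [apply_zero_of_mem_signedPermsOn hπ]
  · simpa using hπ.2 x (by simpa using hx)

end signedPermsOn

lemma exists_mem_closure_apply_eq {m : ℕ} {a : ℤ} (ha : a ≠ 0) (hm : |a| ≤ m) :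
    ∃ σ ∈ closure (burntFlipSet m), σ a = m := by
  have of_pos : ∀ k : ℕ, 1 ≤ k → k ≤ m → ∃ σ ∈ closure (burntFlipSet m), σ k = m := fun k h₁ h₂ =>
    ⟨burntFlip m * burntFlip k,
      mul_mem (burntFlip_mem_closure (h₁.trans h₂) le_rfl) (burntFlip_mem_closure h₁ h₂), by
      rw [Equiv.Perm.mul_apply, burntFlip_apply_self h₁, burntFlip_apply_neg_one (h₁.trans h₂)]⟩
  rw [abs_le] at hm
  rcases ha.lt_or_gt with hneg | hpos
  · obtain ⟨σ, hσ, hσa⟩ := of_pos (a + m + 1).toNat (by omega) (by omega)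
    refine ⟨σ * burntFlip m, mul_mem hσ (burntFlip_mem_closure (by omega) le_rfl), ?_⟩
    rwa [Equiv.Perm.mul_apply, burntFlip_apply_of_neg hm.1 (by omega),
      ← Int.toNat_of_nonneg (by omega : 0 ≤ a + m + 1)]
  · lift a to ℕ using hpos.le
    exact of_pos a (by omega) (by omega)

lemma signedPermsOn_le_closure_burntFlipSet (n : ℕ) :
    signedPermsOn n ≤ closure (burntFlipSet n) := by
  induction n with
  | zero =>
    intro π hπ
    rw [eq_one_of_mem_signedPermsOn_zero hπ]
    exact one_mem _
  | succ n ih =>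
    intro π hπ
    set a := π⁻¹ ((n : ℤ) + 1)
    have hπa : π a = (n : ℤ) + 1 := π.apply_symm_apply _
    have ha₀ : a ≠ 0 := fun h => by
      rw [h, apply_zero_of_mem_signedPermsOn hπ] at hπa
      omega
    have ha : |a| ≤ ((n + 1 : ℕ) : ℤ) :=
      abs_apply_le_of_mem_signedPermsOn (inv_mem hπ)
        (by push_cast; exact (abs_of_nonneg (by positivity)).le)
    obtain ⟨σ, hσ, hσa⟩ := exists_mem_closure_apply_eq ha₀ ha
    have hfix : (π * σ⁻¹) ((n : ℤ) + 1) = (n : ℤ) + 1 := by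
      rw [Equiv.Perm.mul_apply, Equiv.Perm.inv_eq_iff_eq.2 (by exact_mod_cast hσa.symm), hπa]
    have hsmall : π * σ⁻¹ ∈ signedPermsOn n :=
      mem_signedPermsOn_of_apply_eq (mul_mem hπ (inv_mem (closure_burntFlipSet_le _ hσ))) hfix
    rw [← inv_mul_cancel_right π σ]
    exact mul_mem (closure_burntFlipSet_mono n.le_succ (ih hsmall)) hσ

/-- The signed prefix reversals `r_1^B, ..., r_n^B` generate the hyperoctahedral group `B_n`. -/
theorem burntFlips_generate (n : ℕ) :
    Subgroup.closure {σ : Equiv.Perm ℤ | ∃ i, 1 ≤ i ∧ i ≤ n ∧ σ = burntFlip i}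
      = signedPermsOn n :=
  le_antisymm (closure_burntFlipSet_le n) (signedPermsOn_le_closure_burntFlipSet n)
end

section
/- For n ≥ 3 and any i, j, k with 1 ≤ i < j ≤ k−1 and 3 ≤ k ≤ n, the word r_k^B r_j^B r_i^B r_j^B r_k^B r_{k−j+i}^B r_i^B r_{k−j+i}^B equals the identity signed permutation in B_n. -/
/-- The signed reversal of the block of positions `s + 1, …, s + l`. -/
def blockFun (s l : ℕ) : ℤ → ℤ := fun x =>
  if s + 1 ≤ x ∧ x ≤ s + l then x - (2 * s + l + 1)
  else if -(s + l) ≤ x ∧ x ≤ -(s + 1) then x + (2 * s + l + 1) else x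

lemma blockFun_involutive (s l : ℕ) : Function.Involutive (blockFun s l) := by
  intro x; unfold blockFun; split_ifs <;> omega

def blockFlip (s l : ℕ) : Equiv.Perm ℤ := (blockFun_involutive s l).toPerm _

lemma blockFlip_mul_self (s l : ℕ) : blockFlip s l * blockFlip s l = 1 :=
  Equiv.ext (blockFun_involutive s l)

lemma burntFlip_eq_blockFlip (i : ℕ) : burntFlip i = blockFlip 0 i := by
  ext x
  simp only [burntFlip, blockFlip, Function.Involutive.coe_toPerm, burntFun, blockFun]
  split_ifs <;> omega

lemma burntFlip_mul_blockFlip_mul_burntFlip {s l k : ℕ} (h : s + l ≤ k) :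
    burntFlip k * blockFlip s l * burntFlip k = blockFlip (k - s - l) l := by
  ext x
  simp only [Equiv.Perm.mul_apply, burntFlip, blockFlip, Function.Involutive.coe_toPerm,
    burntFun, blockFun]
  push_cast [Nat.sub_sub, h]
  split_ifs <;> omega

lemma burntFlip_mul_burntFlip_mul_burntFlip {i j : ℕ} (h : i ≤ j) :
    burntFlip j * burntFlip i * burntFlip j = blockFlip (j - i) i := by
  rw [burntFlip_eq_blockFlip i, burntFlip_mul_blockFlip_mul_burntFlip (by omega),
    Nat.sub_zero]

theorem burnt_eight_cycle_form1_general (i j k : ℕ)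
    (hij : i < j) (hjk : j ≤ k - 1) :
    burntFlip k * burntFlip j * burntFlip i * burntFlip j * burntFlip k *
      burntFlip (k - j + i) * burntFlip i * burntFlip (k - j + i) = 1 := by
  have outer : burntFlip k * (burntFlip j * burntFlip i * burntFlip j) * burntFlip k =
      blockFlip (k - j) i := by
    rw [burntFlip_mul_burntFlip_mul_burntFlip hij.le,
      burntFlip_mul_blockFlip_mul_burntFlip (by omega)]
    congr 1; omega
  have inner : burntFlip (k - j + i) * burntFlip i * burntFlip (k - j + i) =
      blockFlip (k - j) i := by
    rw [burntFlip_mul_burntFlip_mul_burntFlip (by omega), Nat.add_sub_cancel]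
  calc _ = (burntFlip k * (burntFlip j * burntFlip i * burntFlip j) * burntFlip k) *
        (burntFlip (k - j + i) * burntFlip i * burntFlip (k - j + i)) := by
          simp only [mul_assoc]
    _ = 1 := by rw [outer, inner, blockFlip_mul_self]

/-- For `n ≥ 3` and `1 ≤ i < j ≤ k-1`, `3 ≤ k ≤ n`, the word
`r_k^B r_j^B r_i^B r_j^B r_k^B r_{k-j+i}^B r_i^B r_{k-j+i}^B` equals the identity in `B_n`. -/
theorem burnt_eight_cycle_form1 (n i j k : ℕ) (hn : 3 ≤ n)
    (hi : 1 ≤ i) (hij : i < j) (hjk : j ≤ k - 1) (hk : 3 ≤ k) (hkn : k ≤ n) :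
    burntFlip k * burntFlip j * burntFlip i * burntFlip j * burntFlip k *
      burntFlip (k - j + i) * burntFlip i * burntFlip (k - j + i) = 1 :=
  burnt_eight_cycle_form1_general i j k hij hjk
end

section
/- For n ≥ 2 and 2 ≤ k ≤ n, the word (r_k^B r_1^B)^4 = r_k^B r_1^B r_k^B r_1^B r_k^B r_1^B r_k^B r_1^B equals the identity in B_n; i.e., r_k^B r_1^B has order 4. -/
theorem burntFlip_mul_burntFlip_one_apply {k : ℕ} (hk : 1 ≤ k) (j : ℤ) :
    (burntFlip k * burntFlip 1) j =
      if j = 1 then (k : ℤ) else if j = -1 then -k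
      else if 2 ≤ j ∧ j ≤ k then j - (k + 1)
      else if -k ≤ j ∧ j ≤ -2 then j + (k + 1) else j := by
  simp only [Equiv.Perm.mul_apply, burntFlip, Function.Involutive.coe_toPerm, burntFun]
  push_cast
  split_ifs <;> omega

theorem burntFlip_mul_burntFlip_one_sq_apply {k : ℕ} (hk : 2 ≤ k) (j : ℤ) :
    ((burntFlip k * burntFlip 1) ^ 2) j =
      if j = 1 ∨ j = -1 ∨ j = k ∨ j = -k then -j else j := by
  have hk₁ : 1 ≤ k := by omega
  rw [sq, Equiv.Perm.mul_apply, burntFlip_mul_burntFlip_one_apply hk₁,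
    burntFlip_mul_burntFlip_one_apply hk₁]
  split_ifs <;> first | omega | simp_all

theorem burntFlip_mul_burntFlip_one_pow_four {k : ℕ} (hk : 2 ≤ k) :
    (burntFlip k * burntFlip 1) ^ 4 = 1 := by
  ext j
  rw [show 4 = 2 * 2 from rfl, pow_mul, sq, Equiv.Perm.mul_apply,
    burntFlip_mul_burntFlip_one_sq_apply hk, burntFlip_mul_burntFlip_one_sq_apply hk,
    Equiv.Perm.one_apply]
  split_ifs <;> omega

theorem burntFlip_mul_burntFlip_one_sq_ne_one {k : ℕ} (hk : 2 ≤ k) :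
    (burntFlip k * burntFlip 1) ^ 2 ≠ 1 := by
  intro h
  have h1 := burntFlip_mul_burntFlip_one_sq_apply hk 1
  rw [h, Equiv.Perm.one_apply, if_pos (Or.inl rfl)] at h1
  omega

theorem orderOf_burntFlip_mul_burntFlip_one {k : ℕ} (hk : 2 ≤ k) :
    orderOf (burntFlip k * burntFlip 1) = 4 :=
  orderOf_eq_prime_pow (p := 2) (n := 1) (burntFlip_mul_burntFlip_one_sq_ne_one hk)
    (burntFlip_mul_burntFlip_one_pow_four hk)

theorem burnt_eight_cycle_form4_general (k : ℕ) (hk : 2 ≤ k) :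
    burntFlip k * burntFlip 1 * burntFlip k * burntFlip 1 * burntFlip k * burntFlip 1 *
      burntFlip k * burntFlip 1 = 1
    ∧ orderOf (burntFlip k * burntFlip 1) = 4 := by
  refine ⟨?_, orderOf_burntFlip_mul_burntFlip_one hk⟩
  simpa only [pow_succ, pow_zero, one_mul, mul_assoc] using burntFlip_mul_burntFlip_one_pow_four hk

/-- For `n ≥ 2` and `2 ≤ k ≤ n`, the word `(r_k^B r_1^B)^4` equals the identity in `B_n`;
indeed `r_k^B r_1^B` has order 4. -/
theorem burnt_eight_cycle_form4 (n k : ℕ) (hn : 2 ≤ n) (hk : 2 ≤ k) (hkn : k ≤ n) :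
    burntFlip k * burntFlip 1 * burntFlip k * burntFlip 1 * burntFlip k * burntFlip 1 *
      burntFlip k * burntFlip 1 = 1
    ∧ orderOf (burntFlip k * burntFlip 1) = 4 :=
  burnt_eight_cycle_form4_general k hk
end

section
/- For n ≥ 3, the number of permutations in S_n at pancake distance exactly 3 from the identity equals (n−1)(n−2)² − 1. -/
/-- The prefix reversal `r_i`, as a function on `{1,2,...}` (one-line positions):
it sends `j` to `i+1-j` for `1 ≤ j ≤ i` and fixes everything else. -/
def pancakeFun (i : ℕ) : ℕ → ℕ := fun j => if 1 ≤ j ∧ j ≤ i then i + 1 - j else j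

lemma pancakeFun_invol (i : ℕ) : Function.Involutive (pancakeFun i) := by
  intro j; unfold pancakeFun; split_ifs <;> omega

/-- The pancake flip (prefix reversal) `r_i`, as a permutation. -/
def pancakeFlip (i : ℕ) : Equiv.Perm ℕ := Function.Involutive.toPerm _ (pancakeFun_invol i)


/-- `π` is a product of `k` pancake flips `r_i` with `2 ≤ i ≤ n`. -/
def pancakeWord (n k : ℕ) (π : Equiv.Perm ℕ) : Prop :=
  ∃ l : List ℕ, l.length = k ∧ (∀ i ∈ l, 2 ≤ i ∧ i ≤ n) ∧ (l.map pancakeFlip).prod = π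

/-- The pancake distance from the identity to `π` (in `S_n`) is exactly `k`. -/
def pancakeDistEq (n k : ℕ) (π : Equiv.Perm ℕ) : Prop :=
  pancakeWord n k π ∧ ∀ m < k, ¬ pancakeWord n m π

/-!
A permutation has distance 3 iff it is `r_a r_b r_c` with `2 ≤ a, b, c ≤ n`, `a ≠ b ≠ c`:
such a product is never `1`, a single flip or a product of two flips (evaluate it at one or
two well-chosen points). There are `(n - 1)(n - 2)²` such triples, and distinct ones give the
same permutation only through the braid relation `r₃r₂r₃ = r₂r₃r₂`. Indeed, a product moves
its largest letter `M` and fixes everything above it, so equal products share `M`; the images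
of `M` under the product and its inverse tell whether `r_M` occurs first, last, in the middle
or at both ends. Equal first (or last) letters cancel, leaving a pair of flips, which is
determined by its product; the only remaining case, `r_M r_b r_M = r_d r_M r_f`, forces
`M = 3` and `b = d = f = 2`.
-/

open Equiv Finset

section Flip

variable {i j : ℕ}

lemma pancakeFlip_apply (i j : ℕ) :
    pancakeFlip i j = if 1 ≤ j ∧ j ≤ i then i + 1 - j else j := rfl

lemma pancakeFlip_apply_cases (i j : ℕ) :
    (1 ≤ j ∧ j ≤ i ∧ pancakeFlip i j + j = i + 1) ∨ (¬(1 ≤ j ∧ j ≤ i) ∧ pancakeFlip i j = j) := by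
  rw [pancakeFlip_apply]; split_ifs <;> omega

lemma pancakeFlip_apply_of_lt (h : i < j) : pancakeFlip i j = j := by
  rw [pancakeFlip_apply, if_neg (by omega)]

lemma pancakeFlip_apply_of_le (h1 : 1 ≤ j) (h2 : j ≤ i) : pancakeFlip i j = i + 1 - j := by
  rw [pancakeFlip_apply, if_pos ⟨h1, h2⟩]

lemma pancakeFlip_apply_one (h : 1 ≤ i) : pancakeFlip i 1 = i := by
  rw [pancakeFlip_apply, if_pos (by omega)]; omega

lemma pancakeFlip_apply_self (h : 1 ≤ i) : pancakeFlip i i = 1 := by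
  rw [pancakeFlip_apply, if_pos (by omega)]; omega

@[simp] lemma pancakeFlip_inv (i : ℕ) : (pancakeFlip i)⁻¹ = pancakeFlip i := rfl

@[simp] lemma pancakeFlip_mul_self (i : ℕ) : pancakeFlip i * pancakeFlip i = 1 :=
  Equiv.ext (pancakeFun_invol i)

lemma pancakeFlip_braid :
    pancakeFlip 3 * pancakeFlip 2 * pancakeFlip 3 =
      pancakeFlip 2 * pancakeFlip 3 * pancakeFlip 2 := by
  ext j
  simp only [Perm.mul_apply, pancakeFlip_apply]
  split_ifs <;> omega

end Flip

section Products

variable {a b c d e f j : ℕ}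

lemma eq_of_flip2_eq (ha : 2 ≤ a) (hb : 2 ≤ b) (hd : 2 ≤ d) (he : 2 ≤ e)
    (hde : d ≠ e) (h : pancakeFlip a * pancakeFlip b = pancakeFlip d * pancakeFlip e) :
    a = d ∧ b = e := by
  have hb' := Perm.congr_fun h b
  have he' := Perm.congr_fun h e
  simp only [Perm.mul_apply] at hb' he'
  rw [pancakeFlip_apply_self (by omega), pancakeFlip_apply_one (by omega)] at hb' he'
  have := pancakeFlip_apply_cases e b
  have := pancakeFlip_apply_cases d (pancakeFlip e b)
  have := pancakeFlip_apply_cases b e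
  have := pancakeFlip_apply_cases a (pancakeFlip b e)
  omega

lemma flip3_inv : (pancakeFlip a * pancakeFlip b * pancakeFlip c)⁻¹ =
    pancakeFlip c * pancakeFlip b * pancakeFlip a := by
  simp [mul_assoc]

lemma flip3_ne_flip (ha : 2 ≤ a) (hb : 2 ≤ b) (hc : 2 ≤ c) (hab : a ≠ b) (hbc : b ≠ c) :
    pancakeFlip a * pancakeFlip b * pancakeFlip c ≠ pancakeFlip d := by
  intro h
  have hc' := Perm.congr_fun h c
  have h1 := Perm.congr_fun (congrArg (·⁻¹) h) 1
  simp only [Perm.mul_apply, mul_inv_rev, pancakeFlip_inv] at hc' h1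
  rw [pancakeFlip_apply_self (by omega), pancakeFlip_apply_one (by omega)] at hc'
  rw [pancakeFlip_apply_one (by omega)] at h1
  have := pancakeFlip_apply_cases a b
  have := pancakeFlip_apply_cases d c
  have := pancakeFlip_apply_cases d 1
  have := pancakeFlip_apply_cases b a
  have := pancakeFlip_apply_cases c (pancakeFlip b a)
  omega

lemma flip3_ne_flip2 (ha : 2 ≤ a) (hb : 2 ≤ b) (hc : 2 ≤ c) (hd : 2 ≤ d) (he : 2 ≤ e) :
    pancakeFlip a * pancakeFlip b * pancakeFlip c ≠ pancakeFlip d * pancakeFlip e := by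
  intro h
  have hinv : pancakeFlip c * pancakeFlip b * pancakeFlip a = pancakeFlip e * pancakeFlip d := by
    simpa [mul_assoc] using congrArg (·⁻¹) h
  have hc' := Perm.congr_fun h c
  have ha' := Perm.congr_fun hinv a
  have hd' := Perm.congr_fun hinv d
  simp only [Perm.mul_apply] at hc' ha' hd'
  rw [pancakeFlip_apply_self (by omega), pancakeFlip_apply_one (by omega)] at hc' ha'
  have := pancakeFlip_apply_cases a b
  have := pancakeFlip_apply_cases e c; have := pancakeFlip_apply_cases d (pancakeFlip e c)
  have := pancakeFlip_apply_cases c b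
  have := pancakeFlip_apply_cases d a; have := pancakeFlip_apply_cases e (pancakeFlip d a)
  have := pancakeFlip_apply_cases d d; have := pancakeFlip_apply_cases e (pancakeFlip d d)
  have := pancakeFlip_apply_cases a d; have := pancakeFlip_apply_cases b (pancakeFlip a d)
  have := pancakeFlip_apply_cases c (pancakeFlip b (pancakeFlip a d))
  omega

lemma flip3_apply_of_lt (ha : a < j) (hb : b < j) (hc : c < j) :
    (pancakeFlip a * pancakeFlip b * pancakeFlip c) j = j := by
  simp only [Perm.mul_apply, pancakeFlip_apply_of_lt, *]

lemma flip3_apply_mid (ha : 1 ≤ a) (hcb : c < b) :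
    (pancakeFlip a * pancakeFlip b * pancakeFlip c) b = a := by
  simp only [Perm.mul_apply, pancakeFlip_apply_of_lt hcb,
    pancakeFlip_apply_self (by omega : 1 ≤ b), pancakeFlip_apply_one ha]

lemma flip3_apply_max_ne (hb : 2 ≤ b) (hab : a ≠ b) (hbc : b ≠ c) :
    (pancakeFlip a * pancakeFlip b * pancakeFlip c) (max a (max b c)) ≠ max a (max b c) := by
  simp only [Perm.mul_apply]
  have := pancakeFlip_apply_cases c (max a (max b c))
  have := pancakeFlip_apply_cases b (pancakeFlip c (max a (max b c)))
  have := pancakeFlip_apply_cases a (pancakeFlip b (pancakeFlip c (max a (max b c))))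
  omega

lemma flip3_apply_max_eq_one_iff {M : ℕ} (ha : 2 ≤ a) (hab : a ≠ b) (hbc : b ≠ c)
    (hM : max a (max b c) = M) :
    (pancakeFlip a * pancakeFlip b * pancakeFlip c) M = 1 ↔ a = M ∧ c < M := by
  simp only [Perm.mul_apply]
  have := pancakeFlip_apply_cases c M
  have := pancakeFlip_apply_cases b (pancakeFlip c M)
  have := pancakeFlip_apply_cases a (pancakeFlip b (pancakeFlip c M))
  omega

lemma max_eq_of_flip3_eq (hb : 2 ≤ b) (he : 2 ≤ e) (hab : a ≠ b) (hbc : b ≠ c) (hde : d ≠ e)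
    (hef : e ≠ f)
    (h : pancakeFlip a * pancakeFlip b * pancakeFlip c =
      pancakeFlip d * pancakeFlip e * pancakeFlip f) :
    max a (max b c) = max d (max e f) := by
  rcases lt_trichotomy (max a (max b c)) (max d (max e f)) with hlt | heq | hgt
  · refine absurd ?_ (flip3_apply_max_ne he hde hef)
    rw [← h, flip3_apply_of_lt] <;> omega
  · exact heq
  · refine absurd ?_ (flip3_apply_max_ne hb hab hbc)
    rw [h, flip3_apply_of_lt] <;> omega

lemma flip_conj_eq_flip_conj (ha : 2 ≤ a) (he : 2 ≤ e) (hab : a < b) (heb : e < b)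
    (h : pancakeFlip a * pancakeFlip b * pancakeFlip a =
      pancakeFlip b * pancakeFlip e * pancakeFlip b) :
    a = 2 ∧ b = 3 ∧ e = 2 := by
  have h1 := Perm.congr_fun h 1
  have h2 := Perm.congr_fun h 2
  have ha' := Perm.congr_fun h a
  simp only [Perm.mul_apply] at h1 h2 ha'
  rw [pancakeFlip_apply_one (by omega), pancakeFlip_apply_of_le (by omega) hab.le,
    pancakeFlip_apply_one (by omega), pancakeFlip_apply_of_lt heb,
    pancakeFlip_apply_self (by omega)] at h1
  rw [pancakeFlip_apply_of_le (i := a) (j := 2) (by omega) ha,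
    pancakeFlip_apply_of_le (i := b) (j := a + 1 - 2) (by omega) (by omega),
    pancakeFlip_apply_of_le (i := b) (j := 2) (by omega) (by omega)] at h2
  rw [pancakeFlip_apply_self (by omega), pancakeFlip_apply_one (by omega),
    pancakeFlip_apply_of_lt hab, pancakeFlip_apply_of_le (by omega) hab.le] at ha'
  have := pancakeFlip_apply_cases a (b + 1 - a)
  have := pancakeFlip_apply_cases a (b + 1 - (a + 1 - 2))
  have := pancakeFlip_apply_cases e (b + 1 - 2)
  have := pancakeFlip_apply_cases b (pancakeFlip e (b + 1 - 2))
  have := pancakeFlip_apply_cases e (b + 1 - a)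
  have := pancakeFlip_apply_cases b (pancakeFlip e (b + 1 - a))
  omega

lemma eq_braid_of_flip3_eq (hb : 2 ≤ b) (hd : 2 ≤ d) (hf : 2 ≤ f) (hba : b < a) (hda : d < a)
    (hfa : f < a)
    (h : pancakeFlip a * pancakeFlip b * pancakeFlip a =
      pancakeFlip d * pancakeFlip a * pancakeFlip f) :
    a = 3 ∧ b = 2 := by
  obtain rfl : d = f := by
    have hd' : (pancakeFlip a * pancakeFlip b * pancakeFlip a) a = d := by
      rw [h]; exact flip3_apply_mid (by omega) hfa
    have hf' : (pancakeFlip a * pancakeFlip b * pancakeFlip a) a = f := by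
      rw [← flip3_inv, h, flip3_inv]; exact flip3_apply_mid (by omega) hda
    rw [← hd', hf']
  have := flip_conj_eq_flip_conj hd hb hda hba h.symm
  omega

theorem eq_or_braid_of_flip3_eq (ha : 2 ≤ a) (hb : 2 ≤ b) (hc : 2 ≤ c) (hd : 2 ≤ d) (he : 2 ≤ e)
    (hf : 2 ≤ f) (hab : a ≠ b) (hbc : b ≠ c) (hde : d ≠ e) (hef : e ≠ f)
    (h : pancakeFlip a * pancakeFlip b * pancakeFlip c =
      pancakeFlip d * pancakeFlip e * pancakeFlip f) :
    (a, b, c) = (d, e, f) ∨ (a, b, c) = (3, 2, 3) ∨ (d, e, f) = (3, 2, 3) := by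
  have hinv : pancakeFlip c * pancakeFlip b * pancakeFlip a =
      pancakeFlip f * pancakeFlip e * pancakeFlip d := by
    rw [← flip3_inv, h, flip3_inv]
  by_cases had : a = d
  · subst had
    obtain ⟨rfl, rfl⟩ := eq_of_flip2_eq hb hc he hf hef
      (mul_left_cancel (by simpa only [mul_assoc] using h))
    exact Or.inl rfl
  by_cases hcf : c = f
  · subst hcf
    obtain ⟨rfl, rfl⟩ := eq_of_flip2_eq hb ha he hd hde.symm
      (mul_left_cancel (by simpa only [mul_assoc] using hinv))
    exact Or.inl rfl
  obtain ⟨M, hM⟩ : ∃ M, max a (max b c) = M := ⟨_, rfl⟩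
  have hM' : max d (max e f) = M := (max_eq_of_flip3_eq hb he hab hbc hde hef h).symm.trans hM
  -- `r_M` sends `M` to `1`, so a product does so iff `r_M` is applied last but not first
  have hfirst : (a = M ∧ c < M) ↔ (d = M ∧ f < M) := by
    rw [← flip3_apply_max_eq_one_iff ha hab hbc hM, h, flip3_apply_max_eq_one_iff hd hde hef hM']
  have hlast : (c = M ∧ a < M) ↔ (f = M ∧ d < M) := by
    rw [← flip3_apply_max_eq_one_iff hc hbc.symm hab.symm (by omega), hinv,
      flip3_apply_max_eq_one_iff hf hef.symm hde.symm (by omega)]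
  have hL : (a = M ∧ c = M ∧ b < M) ∨ (b = M ∧ a < M ∧ c < M) := by omega
  have hR : (d = M ∧ f = M ∧ e < M) ∨ (e = M ∧ d < M ∧ f < M) := by omega
  rcases hL with ⟨haM, hcM, hbM⟩ | ⟨hbM, haM, hcM⟩ <;>
    rcases hR with ⟨hdM, hfM, heM⟩ | ⟨heM, hdM, hfM⟩
  · omega
  · obtain ⟨rfl, rfl⟩ : c = a ∧ e = a := by omega
    obtain ⟨rfl, rfl⟩ := eq_braid_of_flip3_eq hb hd hf (by omega) (by omega) (by omega) h
    exact Or.inr (Or.inl rfl)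
  · obtain ⟨rfl, rfl⟩ : f = d ∧ b = d := by omega
    obtain ⟨rfl, rfl⟩ := eq_braid_of_flip3_eq he ha hc (by omega) (by omega) (by omega) h.symm
    exact Or.inr (Or.inr rfl)
  · obtain rfl : b = e := by omega
    have hc' : (pancakeFlip c * pancakeFlip b * pancakeFlip a) b = c :=
      flip3_apply_mid (by omega) (by omega)
    have hf' : (pancakeFlip f * pancakeFlip b * pancakeFlip d) b = f :=
      flip3_apply_mid (by omega) (by omega)
    exact absurd (by rw [← hc', hinv, hf']) hcf

end Products

section Words

variable {n k : ℕ} {π : Perm ℕ}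

lemma pancakeWord_zero : pancakeWord n 0 π ↔ π = 1 := by
  simp [pancakeWord, eq_comm]

lemma pancakeWord_succ :
    pancakeWord n (k + 1) π ↔
      ∃ i, (2 ≤ i ∧ i ≤ n) ∧ ∃ σ, pancakeWord n k σ ∧ π = pancakeFlip i * σ := by
  constructor
  · rintro ⟨_ | ⟨i, l⟩, hl, hmem, rfl⟩
    · simp at hl
    · exact ⟨i, hmem i (by simp), _,
        ⟨l, by simpa using hl, fun j hj => hmem j (by simp [hj]), rfl⟩, by simp⟩
  · rintro ⟨i, hi, _, ⟨l, rfl, hmem, rfl⟩, rfl⟩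
    exact ⟨i :: l, rfl, by simpa [hi] using hmem, by simp⟩

lemma pancakeWord_one : pancakeWord n 1 π ↔ ∃ a, (2 ≤ a ∧ a ≤ n) ∧ π = pancakeFlip a := by
  simp [pancakeWord_succ, pancakeWord_zero]

lemma pancakeWord_two :
    pancakeWord n 2 π ↔
      ∃ a b, (2 ≤ a ∧ a ≤ n) ∧ (2 ≤ b ∧ b ≤ n) ∧ π = pancakeFlip a * pancakeFlip b := by
  simp [pancakeWord_succ, pancakeWord_zero]

lemma pancakeWord_three :
    pancakeWord n 3 π ↔ ∃ a b c, (2 ≤ a ∧ a ≤ n) ∧ (2 ≤ b ∧ b ≤ n) ∧ (2 ≤ c ∧ c ≤ n) ∧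
      π = pancakeFlip a * pancakeFlip b * pancakeFlip c := by
  simp [pancakeWord_succ, pancakeWord_zero, mul_assoc, and_assoc]

end Words

lemma not_pancakeWord_flip3 {n m a b c : ℕ} (ha : 2 ≤ a) (hb : 2 ≤ b) (hc : 2 ≤ c) (hab : a ≠ b)
    (hbc : b ≠ c) (hm : m < 3) :
    ¬ pancakeWord n m (pancakeFlip a * pancakeFlip b * pancakeFlip c) := by
  interval_cases m
  · rw [pancakeWord_zero, ← pancakeFlip_mul_self 2]
    exact flip3_ne_flip2 ha hb hc le_rfl le_rfl
  · rw [pancakeWord_one]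
    rintro ⟨d, -, hd⟩
    exact flip3_ne_flip ha hb hc hab hbc hd
  · rw [pancakeWord_two]
    rintro ⟨d, e, ⟨hd, -⟩, ⟨he, -⟩, hde⟩
    exact flip3_ne_flip2 ha hb hc hd he hde

def reducedTriples (n : ℕ) : Finset (ℕ × ℕ × ℕ) :=
  {x ∈ Icc 2 n ×ˢ Icc 2 n ×ˢ Icc 2 n | x.1 ≠ x.2.1 ∧ x.2.1 ≠ x.2.2}

lemma mem_reducedTriples {n a b c : ℕ} :
    (a, b, c) ∈ reducedTriples n ↔
      (2 ≤ a ∧ a ≤ n) ∧ (2 ≤ b ∧ b ≤ n) ∧ (2 ≤ c ∧ c ≤ n) ∧ a ≠ b ∧ b ≠ c := by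
  simp [reducedTriples, and_assoc]

lemma card_reducedTriples (n : ℕ) : #(reducedTriples n) = (n - 1) * (n - 2) ^ 2 := by
  have hfiber : ∀ b ∈ Icc 2 n, {x ∈ reducedTriples n | x.2.1 = b} =
      (Icc 2 n).erase b ×ˢ {b} ×ˢ (Icc 2 n).erase b := by
    intro b hb
    ext ⟨x, y, z⟩
    simp only [mem_filter, mem_reducedTriples, mem_product, mem_erase, mem_singleton,
      mem_Icc] at hb ⊢
    omega
  rw [card_eq_sum_card_fiberwise (f := fun x => x.2.1) (t := Icc 2 n)
      (fun _ hx => mem_Icc.mpr (mem_reducedTriples.mp hx).2.1),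
    sum_congr rfl fun b hb => by rw [hfiber b hb, card_product, card_product, card_singleton,
      card_erase_of_mem hb],
    sum_const, Nat.card_Icc, smul_eq_mul]
  obtain _ | _ | n := n <;> simp [sq]

def flip3 (x : ℕ × ℕ × ℕ) : Perm ℕ := pancakeFlip x.1 * pancakeFlip x.2.1 * pancakeFlip x.2.2

theorem pancakeDistEq_three_iff {n : ℕ} {π : Perm ℕ} :
    pancakeDistEq n 3 π ↔ ∃ x ∈ (reducedTriples n).erase (3, 2, 3), flip3 x = π := by
  constructor
  · rintro ⟨hw, hmin⟩
    obtain ⟨a, b, c, ha, hb, hc, rfl⟩ := pancakeWord_three.mp hw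
    have hab : a ≠ b := by
      rintro rfl
      exact hmin 1 (by norm_num) (pancakeWord_one.mpr ⟨c, hc, by simp⟩)
    have hbc : b ≠ c := by
      rintro rfl
      exact hmin 1 (by norm_num) (pancakeWord_one.mpr ⟨a, ha, by simp [mul_assoc]⟩)
    by_cases hbraid : a = 3 ∧ b = 2 ∧ c = 3
    · obtain ⟨rfl, rfl, rfl⟩ := hbraid
      exact ⟨(2, 3, 2), mem_erase.mpr ⟨by decide, mem_reducedTriples.mpr (by omega)⟩,
        pancakeFlip_braid.symm⟩
    · refine ⟨(a, b, c), mem_erase.mpr ⟨?_, mem_reducedTriples.mpr ⟨ha, hb, hc, hab, hbc⟩⟩, rfl⟩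
      simpa using hbraid
  · rintro ⟨⟨a, b, c⟩, hx, rfl⟩
    obtain ⟨ha, hb, hc, hab, hbc⟩ := mem_reducedTriples.mp (mem_of_mem_erase hx)
    exact ⟨pancakeWord_three.mpr ⟨a, b, c, ha, hb, hc, rfl⟩,
      fun m hm => not_pancakeWord_flip3 ha.1 hb.1 hc.1 hab hbc hm⟩

lemma flip3_injOn (n : ℕ) : Set.InjOn flip3 ((reducedTriples n).erase (3, 2, 3)) := by
  rintro ⟨a, b, c⟩ hx ⟨d, e, f⟩ hy h
  obtain ⟨hx, hx'⟩ := mem_erase.mp hx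
  obtain ⟨hy, hy'⟩ := mem_erase.mp hy
  obtain ⟨ha, hb, hc, hab, hbc⟩ := mem_reducedTriples.mp hx'
  obtain ⟨hd, he, hf, hde, hef⟩ := mem_reducedTriples.mp hy'
  rcases eq_or_braid_of_flip3_eq ha.1 hb.1 hc.1 hd.1 he.1 hf.1 hab hbc hde hef h with h | h | h
  · exact h
  · exact absurd h hx
  · exact absurd h hy

/-- For `n ≥ 3`, the number of permutations in `S_n` at pancake distance exactly `3`
from the identity is `(n-1)(n-2)² - 1`. -/
theorem count_distance_three (n : ℕ) (hn : 3 ≤ n) :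
    (Nat.card {π : Equiv.Perm ℕ // pancakeDistEq n 3 π} : ℤ)
      = ((n : ℤ) - 1) * ((n : ℤ) - 2) ^ 2 - 1 := by
  classical
  have hbraid : ((3, 2, 3) : ℕ × ℕ × ℕ) ∈ reducedTriples n := mem_reducedTriples.mpr (by omega)
  have hcard : Nat.card {π : Perm ℕ // pancakeDistEq n 3 π} = #(reducedTriples n) - 1 := by
    rw [← card_erase_of_mem hbraid, ← card_image_of_injOn (flip3_injOn n),
      ← Nat.card_eq_finsetCard]
    exact Nat.card_congr (Equiv.subtypeEquivRight fun π => by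
      rw [pancakeDistEq_three_iff, mem_image])
  have hpos : 1 ≤ #(reducedTriples n) := card_pos.mpr ⟨_, hbraid⟩
  rw [hcard, Nat.cast_sub hpos, card_reducedTriples]
  push_cast [Nat.cast_sub (by omega : 1 ≤ n), Nat.cast_sub (by omega : 2 ≤ n)]
  ring
end
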